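/- arXiv:math/0605684 — 2 statements merged into one kernel-verified Lean document; each statement's English description precedes it below -/
import Mathlib

section
/- Let n ≥ 2. In ℝ^{n+1} with standard basis e_1, …, e_{n+1}, set α_i = e_i − e_{i+1} for 1 ≤ i ≤ n, θ = e_1 − e_{n+1}, and c = r_θ ∘ r_{α_1} ∘ ⋯ ∘ r_{α_n}. Put b = (1/n)·(e_1 + ⋯ + e_n − n·e_{n+1}). Then c(b) = b, the sum Σ_{α ∈ O_1} ⟨α, b⟩ = 0 where O_1 = {e_i − e_{i+1} : 1 ≤ i ≤ n−1} ∪ {e_n − e_1}, and the sum Σ_{α ∈ O_2} ⟨α, b⟩ = n+1 where O_2 = {e_i − e_{n+1} : 1 ≤ i ≤ n}. -/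
/-!
The reflection in `e_i - e_j` swaps the coordinates `i` and `j`. Hence on vectors that are
constant except for one "spike" coordinate it just moves the spike, and `b` is such a vector,
with its spike `-1` at `e_{n+1}`. The simple reflections `r_{α_n}, …, r_{α_1}` move the spike
down to `e_1`, and `r_θ` moves it back to `e_{n+1}`, so `c b = b`. Since `⟨e_i - e_j, b⟩ = b_i - b_j`,
every root of `O_1` avoids the spike and pairs to `0`, while every root of `O_2` pairs to `1/n + 1`.
-/

open Finset

/-- The orthogonal reflection `r_a(x) = x - (2⟨x,a⟩/⟨a,a⟩)·a` in a nonzero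
vector `a` of Euclidean space. -/
noncomputable def reflect {m : ℕ} (a : EuclideanSpace ℝ (Fin m))
    (x : EuclideanSpace ℝ (Fin m)) : EuclideanSpace ℝ (Fin m) :=
  x - ((2 * (inner ℝ x a : ℝ) / (inner ℝ a a : ℝ)) • a)

/-- The standard basis vector `e i` of Euclidean space `ℝ^m`. -/
noncomputable def stdVec (m : ℕ) (i : Fin m) : EuclideanSpace ℝ (Fin m) :=
  EuclideanSpace.single i 1

/-- The linear part `c = r_θ ∘ r_{α_1} ∘ ⋯ ∘ r_{α_n}` of the affine Coxeter
element of type `A_n`, acting on `ℝ^{n+1}`; here `α_i = e_i - e_{i+1}`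
(1-based, i.e. `α (i+1) = e i.castSucc - e i.succ` 0-based) and
`θ = e_1 - e_{n+1}` is the highest root. `r_{α_n}` is applied first. -/
noncomputable def coxA (n : ℕ) :
    EuclideanSpace ℝ (Fin (n + 1)) → EuclideanSpace ℝ (Fin (n + 1)) :=
  reflect (stdVec (n + 1) 0 - stdVec (n + 1) (Fin.last n)) ∘
    (List.ofFn fun i : Fin n =>
      reflect (stdVec (n + 1) i.castSucc - stdVec (n + 1) i.succ)).foldr (· ∘ ·) id

lemma inner_stdVec_sub_left {m : ℕ} (i j : Fin m) (x : EuclideanSpace ℝ (Fin m)) :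
    (inner ℝ (stdVec m i - stdVec m j) x : ℝ) = x i - x j := by
  simp [stdVec, inner_sub_left, EuclideanSpace.inner_single_left]

lemma reflect_stdVec_sub_apply {m : ℕ} {i j : Fin m} (hij : i ≠ j)
    (x : EuclideanSpace ℝ (Fin m)) (k : Fin m) :
    reflect (stdVec m i - stdVec m j) x k = x (Equiv.swap i j k) := by
  have hx : (inner ℝ x (stdVec m i - stdVec m j) : ℝ) = x i - x j := by
    rw [real_inner_comm, inner_stdVec_sub_left]
  have hnorm : (inner ℝ (stdVec m i - stdVec m j) (stdVec m i - stdVec m j) : ℝ) = 2 := by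
    rw [inner_stdVec_sub_left]
    norm_num [stdVec, hij, hij.symm]
  rw [reflect, hx, hnorm]
  simp only [PiLp.sub_apply, PiLp.smul_apply, smul_eq_mul, stdVec, PiLp.single_apply,
    Equiv.swap_apply_def]
  split_ifs <;> subst_vars <;> ring

noncomputable def spikeVec {m : ℕ} (a c : ℝ) (k : Fin m) : EuclideanSpace ℝ (Fin m) :=
  WithLp.toLp 2 (Function.update (fun _ => a) k c)

lemma reflect_stdVec_sub_spikeVec {m : ℕ} {i j : Fin m} (hij : i ≠ j) (a c : ℝ) (k : Fin m) :
    reflect (stdVec m i - stdVec m j) (spikeVec a c k) = spikeVec a c (Equiv.swap i j k) := by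
  ext l
  simp [reflect_stdVec_sub_apply hij, spikeVec, Function.update_apply, Equiv.swap_apply_eq_iff]

lemma List.foldr_comp_ofFn_apply_last {α : Type*} {k : ℕ} (f : Fin k → α → α)
    (s : Fin (k + 1) → α) (h : ∀ i, f i (s i.succ) = s i.castSucc) :
    (List.ofFn f).foldr (· ∘ ·) id (s (Fin.last k)) = s 0 := by
  induction k with
  | zero => rfl
  | succ k ih =>
    rw [List.ofFn_succ, List.foldr_cons, Function.comp_apply, ← Fin.succ_last,
      ih (fun i => f i.succ) (fun i => s i.succ) (fun i => h i.succ)]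
    exact h 0

lemma coxA_spikeVec_last {n : ℕ} (hn : n ≠ 0) (a c : ℝ) :
    coxA n (spikeVec a c (Fin.last n)) = spikeVec a c (Fin.last n) := by
  have hchain := List.foldr_comp_ofFn_apply_last
    (fun i : Fin n => reflect (stdVec (n + 1) i.castSucc - stdVec (n + 1) i.succ))
    (spikeVec a c) fun i => by
      rw [reflect_stdVec_sub_spikeVec Fin.castSucc_lt_succ.ne, Equiv.swap_apply_right]
  rw [coxA, Function.comp_apply, hchain, reflect_stdVec_sub_spikeVec, Equiv.swap_apply_left]
  exact fun h => hn (congrArg Fin.val h).symm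

lemma smul_sum_stdVec_sub_eq_spikeVec {n : ℕ} (hn : n ≠ 0) :
    (1 / (n : ℝ)) • ((∑ i : Fin n, stdVec (n + 1) i.castSucc) -
      (n : ℝ) • stdVec (n + 1) (Fin.last n)) = spikeVec (1 / n) (-1) (Fin.last n) := by
  ext j
  induction j using Fin.lastCases with
  | last => simp [spikeVec, stdVec, Fin.castSucc_ne_last, hn]
  | cast j => simp [spikeVec, stdVec, Fin.castSucc_ne_last, Finset.sum_apply, Pi.single_apply]

lemma inner_stdVec_sub_spikeVec {m : ℕ} (a c : ℝ) {i j k : Fin m} (hi : i ≠ k) (hj : j ≠ k) :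
    (inner ℝ (stdVec m i - stdVec m j) (spikeVec a c k) : ℝ) = 0 := by
  simp [inner_stdVec_sub_left, spikeVec, hi, hj]

lemma inner_stdVec_sub_spikeVec_self {m : ℕ} (a c : ℝ) {i k : Fin m} (hi : i ≠ k) :
    (inner ℝ (stdVec m i - stdVec m k) (spikeVec a c k) : ℝ) = a - c := by
  simp [inner_stdVec_sub_left, spikeVec, hi]

lemma stdVec_injective (m : ℕ) : Function.Injective (stdVec m) := fun i j h => by
  simpa [stdVec] using congrArg (fun x : EuclideanSpace ℝ (Fin m) => x i) h

/-- For `n ≥ 2`, the vector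
`b = (1/n)·(e_1 + ⋯ + e_n - n·e_{n+1})` (0-based: `(1/n)·((Σ_{j<n} e_j) - n·e_n)`)
is fixed by the Coxeter element `c` of type `A_n`, the pairings `⟨α, b⟩` sum to
`0` over the orbit `O_1 = {e_j - e_{j+1} : 0 ≤ j ≤ n-2} ∪ {e_{n-1} - e_0}` and to
`n + 1` over the orbit `O_2 = {e_j - e_n : 0 ≤ j ≤ n-1}`. -/
theorem coxeterA_orbit_degrees (n : ℕ) (hn : 2 ≤ n)
    (b : EuclideanSpace ℝ (Fin (n + 1)))
    (hb : b = (1 / (n : ℝ)) • ((∑ i : Fin n, stdVec (n + 1) i.castSucc) -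
      (n : ℝ) • stdVec (n + 1) (Fin.last n))) :
    coxA n b = b ∧
    (∑ᶠ v ∈ ({v | ∃ j : ℕ, ∃ _ : j + 2 ≤ n,
          v = stdVec (n + 1) ⟨j, by omega⟩ - stdVec (n + 1) ⟨j + 1, by omega⟩} ∪
        {stdVec (n + 1) ⟨n - 1, by omega⟩ - stdVec (n + 1) ⟨0, by omega⟩} :
          Set (EuclideanSpace ℝ (Fin (n + 1)))),
        (inner ℝ v b : ℝ)) = 0 ∧
    (∑ᶠ v ∈ ({v | ∃ j : ℕ, ∃ _ : j + 1 ≤ n,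
          v = stdVec (n + 1) ⟨j, by omega⟩ - stdVec (n + 1) ⟨n, by omega⟩} :
          Set (EuclideanSpace ℝ (Fin (n + 1)))),
        (inner ℝ v b : ℝ)) = n + 1 := by
  have hn0 : n ≠ 0 := by omega
  rw [smul_sum_stdVec_sub_eq_spikeVec hn0] at hb
  subst hb
  refine ⟨coxA_spikeVec_last hn0 _ _, ?_, ?_⟩
  · refine (finsum_mem_congr rfl fun v hv => ?_).trans (finsum_mem_zero _)
    rcases hv with ⟨j, hj, rfl⟩ | rfl <;>
      exact inner_stdVec_sub_spikeVec _ _ (Fin.ne_of_val_ne (by simp only [Fin.val_last]; omega))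
        (Fin.ne_of_val_ne (by simp only [Fin.val_last]; omega))
  · have hO₂ : {v | ∃ j : ℕ, ∃ _ : j + 1 ≤ n,
          v = stdVec (n + 1) ⟨j, by omega⟩ - stdVec (n + 1) ⟨n, by omega⟩} =
        Set.range fun j : Fin n => stdVec (n + 1) j.castSucc - stdVec (n + 1) (Fin.last n) := by
      ext v
      exact ⟨fun ⟨j, hj, hv⟩ => ⟨⟨j, hj⟩, hv.symm⟩, fun ⟨j, hv⟩ => ⟨j, j.isLt, hv.symm⟩⟩
    have hinj : Function.Injective fun j : Fin n =>
        stdVec (n + 1) j.castSucc - stdVec (n + 1) (Fin.last n) :=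
      (sub_left_injective.comp (stdVec_injective _)).comp (Fin.castSucc_injective n)
    rw [hO₂, finsum_mem_range hinj, finsum_eq_sum_of_fintype]
    simp only [inner_stdVec_sub_spikeVec_self _ _ (Fin.castSucc_ne_last _),
      Finset.sum_const, Finset.card_univ, Fintype.card_fin, nsmul_eq_mul]
    field_simp
    ring
end

section
/- Let n ≥ 4. In ℝ^{n} with standard basis e_1, …, e_{n}, set α_i = e_i − e_{i+1} for 1 ≤ i ≤ n−1, α_n = e_{n−1} + e_n, θ = e_1 + e_2, and c = r_θ ∘ r_{α_1} ∘ ⋯ ∘ r_{α_n} (with r_{α_n} applied first and r_θ last). Then c(e_1) = −e_1, c(e_n) = −e_n, c(e_i) = e_{i+1} for 2 ≤ i ≤ n−2, and c(e_{n−1}) = e_2; moreover the fixed-point space {v ∈ ℝ^n : c(v) = v} is the one-dimensional subspace spanned by e_2 + ⋯ + e_{n−1}. -/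
/-!
A reflection in `e i - e j` swaps the coordinates `i` and `j`, and one in `e i + e j` swaps them
and changes both signs. Hence the reflections in `α_1, …, α_{n-1}` compose to the cyclic shift of
coordinates, and `c` is the signed permutation (0-based coordinates)
`(c x)_0 = -x_0`, `(c x)_1 = x_{n-2}`, `(c x)_{n-1} = -x_{n-1}`, `(c x)_p = x_{p-1}` otherwise.
The action on the basis is read off from this, and a fixed vector has `x_0 = x_{n-1} = 0` and,
by `x_p = x_{p-1}` for `2 ≤ p ≤ n-2`, constant middle coordinates.
-/

open Finset

section Coordinates

variable {m : ℕ}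

lemma stdVec_apply (i k : Fin m) : stdVec m i k = if k = i then 1 else 0 := by
  simp [stdVec, PiLp.single_apply]

lemma sum_stdVec_apply (p : Fin m) : (∑ i, stdVec m i) p = 1 := by
  simp [WithLp.ofLp_sum, stdVec_apply]

lemma inner_stdVec_right (x : EuclideanSpace ℝ (Fin m)) (i : Fin m) :
    inner ℝ x (stdVec m i) = x i := by
  simp [stdVec, EuclideanSpace.inner_single_right]

lemma reflect_eq_of_inner_self_eq_two {a : EuclideanSpace ℝ (Fin m)} (ha : inner ℝ a a = (2 : ℝ))
    (x : EuclideanSpace ℝ (Fin m)) : reflect a x = x - inner ℝ x a • a := by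
  rw [reflect, ha, mul_div_cancel_left₀ _ two_ne_zero]

lemma reflect_stdVec_sub_stdVec_apply {i j : Fin m} (hij : i ≠ j)
    (x : EuclideanSpace ℝ (Fin m)) (k : Fin m) :
    reflect (stdVec m i - stdVec m j) x k = x (Equiv.swap i j k) := by
  have hnorm : inner ℝ (stdVec m i - stdVec m j) (stdVec m i - stdVec m j) = (2 : ℝ) := by
    rw [inner_sub_right, inner_stdVec_right, inner_stdVec_right]
    norm_num [stdVec_apply, hij, hij.symm]
  rw [reflect_eq_of_inner_self_eq_two hnorm]
  simp only [PiLp.sub_apply, PiLp.smul_apply, smul_eq_mul, inner_sub_right, inner_stdVec_right,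
    stdVec_apply, Equiv.swap_apply_def]
  split_ifs <;> subst_vars <;> simp_all

lemma reflect_stdVec_add_stdVec_apply {i j : Fin m} (hij : i ≠ j)
    (x : EuclideanSpace ℝ (Fin m)) (k : Fin m) :
    reflect (stdVec m i + stdVec m j) x k =
      if k = i then -x j else if k = j then -x i else x k := by
  have hnorm : inner ℝ (stdVec m i + stdVec m j) (stdVec m i + stdVec m j) = (2 : ℝ) := by
    rw [inner_add_right, inner_stdVec_right, inner_stdVec_right]
    norm_num [stdVec_apply, hij, hij.symm]
  rw [reflect_eq_of_inner_self_eq_two hnorm]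
  simp only [PiLp.sub_apply, PiLp.smul_apply, smul_eq_mul, inner_add_right, inner_stdVec_right,
    PiLp.add_apply, stdVec_apply]
  split_ifs <;> subst_vars <;> simp_all

end Coordinates

lemma List.foldr_comp_apply {A : Type*} (l : List (A → A)) (g : A → A) (x : A) :
    l.foldr (· ∘ ·) g x = l.foldr (· ∘ ·) id (g x) := by
  induction l with
  | nil => rfl
  | cons f l ih => exact congrArg f ih

lemma List.foldr_comp_ofFn_succ_apply {A : Type*} {k : ℕ} (f : Fin (k + 1) → A → A) (x : A) :
    (List.ofFn f).foldr (· ∘ ·) id x =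
      (List.ofFn fun i : Fin k => f i.castSucc).foldr (· ∘ ·) id (f (Fin.last k) x) := by
  rw [List.ofFn_succ', List.concat_eq_append, List.foldr_concat, List.foldr_comp_apply]
  rfl

lemma foldr_reflect_stdVec_sub_stdVec_succ_apply {m k : ℕ} (hk : k < m)
    (x : EuclideanSpace ℝ (Fin m)) (p : Fin m) :
    (List.ofFn fun i : Fin k =>
        reflect (stdVec m ⟨i, by omega⟩ - stdVec m ⟨i + 1, by omega⟩)).foldr (· ∘ ·) id x p =
      if (p : ℕ) = 0 then x ⟨k, hk⟩ else if (p : ℕ) ≤ k then x ⟨p - 1, by omega⟩ else x p := by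
  induction k generalizing x with
  | zero =>
    split_ifs with hp <;> first | rfl | omega | exact congrArg (x ·) (Fin.ext hp)
  | succ k ih =>
    rw [List.foldr_comp_ofFn_succ_apply]
    refine (ih (by omega) _).trans ?_
    simp only [reflect_stdVec_sub_stdVec_apply (i := ⟨k, _⟩) (j := ⟨k + 1, hk⟩)
      (by simp [Fin.ext_iff]), Equiv.swap_apply_def, Fin.ext_iff, Fin.val_last]
    split_ifs <;> first | omega | exact congrArg (x ·) (Fin.ext (by simp only <;> omega))

/-- The map `c` in type `D_{m+4}`; writing the rank as `m + 4` keeps truncated subtraction out of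
the indices. -/
noncomputable def coxeterD (m : ℕ) :
    EuclideanSpace ℝ (Fin (m + 4)) → EuclideanSpace ℝ (Fin (m + 4)) :=
  reflect (stdVec _ ⟨0, by omega⟩ + stdVec _ ⟨1, by omega⟩) ∘
    (List.ofFn fun i : Fin (m + 4) =>
      reflect (if h : (i : ℕ) + 1 < m + 4 then stdVec _ i - stdVec _ ⟨i + 1, h⟩
        else stdVec _ ⟨m + 2, by omega⟩ + stdVec _ ⟨m + 3, by omega⟩)).foldr (· ∘ ·) id

lemma coxeterD_apply (m : ℕ) (x : EuclideanSpace ℝ (Fin (m + 4))) (p : Fin (m + 4)) :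
    coxeterD m x p =
      if (p : ℕ) = 0 then -x ⟨0, by omega⟩
      else if (p : ℕ) = 1 then x ⟨m + 2, by omega⟩
      else if (p : ℕ) = m + 3 then -x ⟨m + 3, by omega⟩
      else x ⟨p - 1, by omega⟩ := by
  have hcycle (y : EuclideanSpace ℝ (Fin (m + 4))) (q : Fin (m + 4)) :
      (List.ofFn fun i : Fin (m + 3) =>
        reflect (stdVec _ i.castSucc - stdVec _ ⟨i + 1, by omega⟩)).foldr (· ∘ ·) id y q =
        if (q : ℕ) = 0 then y ⟨m + 3, by omega⟩ else if (q : ℕ) ≤ m + 3 then y ⟨q - 1, by omega⟩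
        else y q :=
    foldr_reflect_stdVec_sub_stdVec_succ_apply (by omega) y q
  -- peel off `r_{α_n}`; every remaining factor is a reflection in some `e i - e (i + 1)`
  rw [coxeterD, Function.comp_apply, List.foldr_comp_ofFn_succ_apply]
  simp only [Fin.val_last, Fin.val_castSucc, Nat.add_lt_add_iff_right, Fin.is_lt, dite_true,
    lt_self_iff_false, dite_false]
  rw [reflect_stdVec_add_stdVec_apply (by simp)]
  simp only [hcycle, reflect_stdVec_add_stdVec_apply (i := ⟨m + 2, _⟩) (j := ⟨m + 3, _⟩)
    (by simp [Fin.ext_iff]), Fin.ext_iff]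
  split_ifs <;> (try simp only [neg_neg, neg_inj]) <;>
    first | contradiction | omega

lemma coxeterD_eq_self_iff (m : ℕ) (x : EuclideanSpace ℝ (Fin (m + 4))) :
    coxeterD m x = x ↔ ∃ t : ℝ, x = t • ((∑ i, stdVec _ i) - stdVec _ ⟨0, by omega⟩ -
        stdVec _ ⟨m + 3, by omega⟩) := by
  constructor
  · intro hfix
    have hcoord (a : ℕ) (ha : a < m + 4) := congrArg (· ⟨a, ha⟩) hfix
    simp only [coxeterD_apply] at hcoord
    have hfirst : x ⟨0, by omega⟩ = 0 := by
      have := hcoord 0 (by omega)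
      simp only [if_true] at this
      linarith
    have hlast : x ⟨m + 3, by omega⟩ = 0 := by
      have := hcoord (m + 3) (by omega)
      simp only [show m + 3 ≠ 0 by omega, show m + 3 ≠ 1 by omega, if_true, if_false] at this
      linarith
    have hmid (a : ℕ) (ha : 1 ≤ a) : ∀ _ : a ≤ m + 2, x ⟨a, by omega⟩ = x ⟨1, by omega⟩ := by
      induction a, ha using Nat.le_induction with
      | base => exact fun _ => rfl
      | succ a ha ih =>
        intro han
        have := hcoord (a + 1) (by omega)
        simp only [show a + 1 ≠ 0 by omega, show a + 1 ≠ 1 by omega,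
          show a + 1 ≠ m + 3 by omega, if_false] at this
        exact this.symm.trans (ih (by omega))
    refine ⟨x ⟨1, by omega⟩, ?_⟩
    ext ⟨p, hp⟩
    simp only [PiLp.smul_apply, PiLp.sub_apply, sum_stdVec_apply, stdVec_apply, Fin.ext_iff,
      smul_eq_mul]
    by_cases h0 : p = 0
    · subst h0
      simpa using hfirst
    by_cases hn1 : p = m + 3
    · subst hn1
      simpa using hlast
    simp [h0, hn1, hmid p (by omega) (by omega)]
  · rintro ⟨t, rfl⟩
    ext p
    simp only [coxeterD_apply, PiLp.smul_apply, PiLp.sub_apply, sum_stdVec_apply, stdVec_apply,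
      Fin.ext_iff, smul_eq_mul]
    split_ifs <;> first | contradiction | omega | ring

/-- Type `D_n`, `n ≥ 4`, untwisted case: with simple roots
`α_i = e_i - e_{i+1}` (`i < n-1`, 0-based), `α_n = e_{n-2} + e_{n-1}`, and highest
root `θ = e_0 + e_1`, the linear part `c = r_θ ∘ r_{α_1} ∘ ⋯ ∘ r_{α_n}` of the
affine Coxeter element satisfies `c e_0 = -e_0`, `c e_{n-1} = -e_{n-1}`,
`c e_j = e_{j+1}` for `1 ≤ j ≤ n-3`, `c e_{n-2} = e_1`, and its fixed-point space
is the line spanned by `e_1 + ⋯ + e_{n-2}`, i.e. `(Σ_i e_i) - e_0 - e_{n-1}`. -/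
theorem coxeterD_action_and_fixed_space (n : ℕ) (hn : 4 ≤ n)
    (c : EuclideanSpace ℝ (Fin n) → EuclideanSpace ℝ (Fin n))
    (hc : c = reflect (stdVec n ⟨0, by omega⟩ + stdVec n ⟨1, by omega⟩) ∘
      (List.ofFn fun i : Fin n =>
        reflect (if h : (i : ℕ) + 1 < n then stdVec n i - stdVec n ⟨(i : ℕ) + 1, h⟩
          else stdVec n ⟨n - 2, by omega⟩ + stdVec n ⟨n - 1, by omega⟩)).foldr
        (· ∘ ·) id) :
    c (stdVec n ⟨0, by omega⟩) = -stdVec n ⟨0, by omega⟩ ∧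
    c (stdVec n ⟨n - 1, by omega⟩) = -stdVec n ⟨n - 1, by omega⟩ ∧
    (∀ j : ℕ, ∀ _ : 1 ≤ j, ∀ _ : j + 3 ≤ n,
        c (stdVec n ⟨j, by omega⟩) = stdVec n ⟨j + 1, by omega⟩) ∧
    c (stdVec n ⟨n - 2, by omega⟩) = stdVec n ⟨1, by omega⟩ ∧
    (∀ x : EuclideanSpace ℝ (Fin n), c x = x ↔
      ∃ t : ℝ, x = t • ((∑ i : Fin n, stdVec n i) - stdVec n ⟨0, by omega⟩ -
        stdVec n ⟨n - 1, by omega⟩)) := by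
  obtain ⟨m, rfl⟩ : ∃ m, n = m + 4 := ⟨n - 4, by omega⟩
  obtain rfl : c = coxeterD m := hc
  refine ⟨?_, ?_, fun j _ _ => ?_, ?_, coxeterD_eq_self_iff m⟩
  all_goals
    ext p
    simp only [coxeterD_apply, PiLp.neg_apply, stdVec_apply, Fin.ext_iff]
    split_ifs <;> first | contradiction | omega | norm_num
end
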